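/- Dimension bound for max-information: for any normalized state ρ^{ABC} on A ⊗ B ⊗ C, I_max(A : BC)_ρ ≤ I_max(A : B)_ρ + 2 log|C| (non-smooth version). -/

import Mathlib

open Matrix ComplexOrder Kronecker

/-- Partial trace over the second system of an operator on `A ⊗ B`. -/
noncomputable def margA {a b : Type*} [Fintype a] [Fintype b]
    (ρ : Matrix (a × b) (a × b) ℂ) : Matrix a a ℂ :=
  Matrix.of fun i j => ∑ k : b, ρ (i, k) (j, k)

/-- Max-information `I_max(A : B)_ρ := inf_σ D_max(ρ^{AB} ‖ ρ^A ⊗ σ^B)`, infimum over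
normalized states `σ` on `B`, where `D_max(ρ‖τ) := inf {λ : 2^λ τ ≥ ρ}` (Loewner order). -/
noncomputable def Imax {a b : Type*} [Fintype a] [Fintype b] [DecidableEq a] [DecidableEq b]
    (ρ : Matrix (a × b) (a × b) ℂ) : ℝ :=
  sInf {lam : ℝ | ∃ σ : Matrix b b ℂ, σ.PosSemidef ∧ σ.trace = 1 ∧
      ((((2 : ℝ) ^ lam : ℝ) : ℂ) • (margA ρ ⊗ₖ σ) - ρ).PosSemidef}

/-- The marginal `ρ^{AB}` of a state on `A ⊗ (B ⊗ C)`, obtained by partial trace over `C`. -/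
noncomputable def margAB {a b c : Type*} [Fintype a] [Fintype b] [Fintype c]
    (ρ : Matrix (a × b × c) (a × b × c) ℂ) : Matrix (a × b) (a × b) ℂ :=
  Matrix.of fun p q => ∑ k : c, ρ (p.1, p.2, k) (q.1, q.2, k)

/-!
The key fact is the operator inequality `X ≤ |C| • (Tr_C X ⊗ 1)` for `X ≥ 0` on `A ⊗ C`: writing a
vector as the sum of its `|C|` slices `v_k ⊗ e_k`, Cauchy–Schwarz bounds the quadratic form of `X`
by `|C|` times the sum of its values on the slices, and each of these is at most the value of
`Tr_C X` on `v_k`. Given `ρ^{AB} ≤ 2^μ ρ^A ⊗ σ`, tensoring with `1_C` and applying the inequality to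
`ρ` gives `ρ ≤ |C| • ρ^{AB} ⊗ 1 ≤ 2^(μ + 2 log |C|) ρ^A ⊗ σ ⊗ 1/|C|`. The same inequality, applied
on `A ⊗ B`, shows that the infimum defining `I_max(A : B)` is taken over a nonempty set.
-/

open scoped MatrixOrder

namespace Matrix

section CauchySchwarz

variable {ι κ 𝕜 : Type*} [Fintype ι] [Fintype κ] [RCLike 𝕜]

theorem PosSemidef.dotProduct_mulVec_sum_le {X : Matrix ι ι 𝕜} (hX : X.PosSemidef)
    (u : κ → ι → 𝕜) :
    star (∑ k, u k) ⬝ᵥ (X *ᵥ ∑ k, u k) ≤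
      Fintype.card κ * ∑ k, star (u k) ⬝ᵥ (X *ᵥ u k) := by
  set B : κ → κ → 𝕜 := fun k l => star (u k) ⬝ᵥ (X *ᵥ u l) with hB
  have h_sum : star (∑ k, u k) ⬝ᵥ (X *ᵥ ∑ k, u k) = ∑ k, ∑ l, B k l := by
    simp only [hB, star_sum, sum_dotProduct, mulVec_sum, dotProduct_sum]
    exact Finset.sum_comm
  have h_diff (k l : κ) :
      star (u k - u l) ⬝ᵥ (X *ᵥ (u k - u l)) = B k k + B l l - B k l - B l k := by
    simp only [hB, star_sub, sub_dotProduct, dotProduct_sub, mulVec_sub]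
    ring
  have h_pairs : ∑ k, ∑ l, star (u k - u l) ⬝ᵥ (X *ᵥ (u k - u l)) =
      2 * (Fintype.card κ * ∑ k, B k k - ∑ k, ∑ l, B k l) := by
    simp only [h_diff, Finset.sum_sub_distrib, Finset.sum_add_distrib, Finset.sum_const,
      Finset.card_univ, nsmul_eq_mul, ← Finset.mul_sum]
    rw [Finset.sum_comm (f := fun k l => B l k)]
    ring
  have h_nonneg : 0 ≤ ∑ k, ∑ l, star (u k - u l) ⬝ᵥ (X *ᵥ (u k - u l)) :=
    Finset.sum_nonneg fun k _ => Finset.sum_nonneg fun l _ => hX.dotProduct_mulVec_nonneg _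
  rw [h_pairs] at h_nonneg
  rw [h_sum, ← sub_nonneg]
  simpa using mul_nonneg (inv_nonneg.mpr zero_le_two) h_nonneg

end CauchySchwarz

theorem submatrix_equiv_le_submatrix_equiv_iff {m n 𝕜 : Type*} [RCLike 𝕜]
    {A B : Matrix n n 𝕜} (e : m ≃ n) : A.submatrix e e ≤ B.submatrix e e ↔ A ≤ B :=
  posSemidef_submatrix_equiv (M := B - A) e

theorem kronecker_le_kronecker_of_posSemidef_right {m n 𝕜 : Type*} [Finite m] [Finite n]
    [RCLike 𝕜] {A B : Matrix m m 𝕜} {C : Matrix n n 𝕜} (h : A ≤ B) (hC : C.PosSemidef) :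
    A ⊗ₖ C ≤ B ⊗ₖ C := by
  have h_sub : (B - A) ⊗ₖ C = B ⊗ₖ C - A ⊗ₖ C := by
    ext
    simp [sub_mul]
  rw [le_iff, ← h_sub]
  exact (le_iff.mp h).kronecker hC

end Matrix

section PartialTrace

variable {d c : Type*}

def vecTensorSingle [DecidableEq c] (v : d → ℂ) (k : c) : d × c → ℂ :=
  fun p => if p.2 = k then v p.1 else 0

theorem sum_vecTensorSingle [Fintype c] [DecidableEq c] (v : d × c → ℂ) :
    ∑ k, vecTensorSingle (fun i => v (i, k)) k = v := by
  ext p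
  simp [vecTensorSingle, Finset.sum_apply]

variable [Fintype d] [Fintype c]

theorem dotProduct_margA_mulVec [DecidableEq c] (X : Matrix (d × c) (d × c) ℂ) (v : d → ℂ) :
    star v ⬝ᵥ (margA X *ᵥ v) =
      ∑ k, star (vecTensorSingle v k) ⬝ᵥ (X *ᵥ vecTensorSingle v k) := by
  simp only [dotProduct, mulVec, margA, Matrix.of_apply, Pi.star_apply, vecTensorSingle,
    Fintype.sum_prod_type, Finset.mul_sum, Finset.sum_mul]
  conv_lhs => enter [2, x]; rw [Finset.sum_comm]
  rw [Finset.sum_comm]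
  refine Finset.sum_congr rfl fun k _ => ?_
  simp only [apply_ite (star : ℂ → ℂ), star_zero, ite_mul, zero_mul, mul_ite, mul_zero]
  simp [Finset.sum_ite_eq']

theorem dotProduct_kronecker_one_mulVec [DecidableEq c] (M : Matrix d d ℂ) (v : d × c → ℂ) :
    star v ⬝ᵥ ((M ⊗ₖ (1 : Matrix c c ℂ)) *ᵥ v) =
      ∑ k, star (fun i => v (i, k)) ⬝ᵥ (M *ᵥ fun i => v (i, k)) := by
  simp only [dotProduct, mulVec, kroneckerMap_apply, Pi.star_apply,
    Fintype.sum_prod_type, Matrix.one_apply, mul_ite, mul_one, mul_zero, ite_mul, zero_mul]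
  rw [Finset.sum_comm]
  refine Finset.sum_congr rfl fun k _ => ?_
  simp [Finset.mul_sum]

theorem margA_isHermitian {X : Matrix (d × c) (d × c) ℂ} (hX : X.IsHermitian) :
    (margA X).IsHermitian := by
  ext i j
  simp only [conjTranspose_apply, margA, Matrix.of_apply, star_sum]
  exact Finset.sum_congr rfl fun k _ => congrFun (congrFun hX (i, k)) (j, k)

theorem margA_posSemidef {X : Matrix (d × c) (d × c) ℂ} (hX : X.PosSemidef) :
    (margA X).PosSemidef := by
  classical
  refine .of_dotProduct_mulVec_nonneg (margA_isHermitian hX.1) fun v => ?_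
  rw [dotProduct_margA_mulVec]
  exact Finset.sum_nonneg fun k _ => hX.dotProduct_mulVec_nonneg _

theorem trace_margA (X : Matrix (d × c) (d × c) ℂ) : (margA X).trace = X.trace := by
  simp [Matrix.trace, margA, Fintype.sum_prod_type]

theorem Matrix.PosSemidef.le_card_smul_margA_kronecker_one [DecidableEq c]
    {X : Matrix (d × c) (d × c) ℂ} (hX : X.PosSemidef) :
    X ≤ (Fintype.card c : ℂ) • (margA X ⊗ₖ (1 : Matrix c c ℂ)) := by
  refine .of_dotProduct_mulVec_nonneg
    ((((margA_posSemidef hX).kronecker .one).smul (Nat.cast_nonneg _)).1.sub hX.1) fun v => ?_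
  rw [sub_mulVec, dotProduct_sub, sub_nonneg, smul_mulVec, dotProduct_smul, smul_eq_mul,
    dotProduct_kronecker_one_mulVec]
  set w : c → d × c → ℂ := fun k => vecTensorSingle (fun i => v (i, k)) k
  calc star v ⬝ᵥ (X *ᵥ v)
      = star (∑ k, w k) ⬝ᵥ (X *ᵥ ∑ k, w k) := by rw [sum_vecTensorSingle]
    _ ≤ Fintype.card c * ∑ k, star (w k) ⬝ᵥ (X *ᵥ w k) := hX.dotProduct_mulVec_sum_le w
    _ ≤ Fintype.card c * ∑ k, star (fun i => v (i, k)) ⬝ᵥ (margA X *ᵥ fun i => v (i, k)) := by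
      refine mul_le_mul_of_nonneg_left (Finset.sum_le_sum fun k _ => ?_) (Nat.cast_nonneg _)
      rw [dotProduct_margA_mulVec]
      exact Finset.single_le_sum (f := fun l => star (vecTensorSingle (fun i => v (i, k)) l) ⬝ᵥ
        (X *ᵥ vecTensorSingle (fun i => v (i, k)) l))
        (fun l _ => hX.dotProduct_mulVec_nonneg _) (Finset.mem_univ k)

end PartialTrace

section MaxInformation

variable {a b c : Type*} [Fintype a] [Fintype b] [Fintype c]

theorem margA_margAB (ρ : Matrix (a × b × c) (a × b × c) ℂ) : margA (margAB ρ) = margA ρ := by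
  ext i j
  simp [margA, margAB, Fintype.sum_prod_type]

theorem margA_submatrix_prodAssoc (ρ : Matrix (a × b × c) (a × b × c) ℂ) :
    margA (ρ.submatrix (Equiv.prodAssoc a b c) (Equiv.prodAssoc a b c)) = margAB ρ := by
  ext p q
  simp [margA, margAB]

theorem margAB_posSemidef {ρ : Matrix (a × b × c) (a × b × c) ℂ} (hρ : ρ.PosSemidef) :
    (margAB ρ).PosSemidef :=
  margA_submatrix_prodAssoc ρ ▸ margA_posSemidef (hρ.submatrix _)

theorem posSemidef_inv_card_smul_one [DecidableEq c] :
    ((Fintype.card c : ℂ)⁻¹ • (1 : Matrix c c ℂ)).PosSemidef :=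
  PosSemidef.one.smul (inv_nonneg.mpr (Nat.cast_nonneg _))

theorem trace_inv_card_smul_one [DecidableEq c] [Nonempty c] :
    ((Fintype.card c : ℂ)⁻¹ • (1 : Matrix c c ℂ)).trace = 1 := by
  rw [trace_smul, trace_one, smul_eq_mul, inv_mul_cancel₀ (by simp)]

theorem Real.two_rpow_two_mul_logb {x : ℝ} (hx : 0 < x) :
    (2 : ℝ) ^ (2 * Real.logb 2 x) = x ^ 2 := by
  rw [mul_comm, Real.rpow_mul zero_le_two, Real.rpow_logb zero_lt_two one_lt_two.ne' hx,
    Real.rpow_two]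

def imaxFeasible (ρ : Matrix (a × b) (a × b) ℂ) : Set ℝ :=
  {lam | ∃ σ : Matrix b b ℂ, σ.PosSemidef ∧ σ.trace = 1 ∧
    ρ ≤ (((2 : ℝ) ^ lam : ℝ) : ℂ) • (margA ρ ⊗ₖ σ)}

theorem Imax_eq_sInf_imaxFeasible [DecidableEq a] [DecidableEq b]
    (ρ : Matrix (a × b) (a × b) ℂ) : Imax ρ = sInf (imaxFeasible ρ) :=
  rfl

theorem nonneg_of_mem_imaxFeasible {ρ : Matrix (a × b) (a × b) ℂ} (hρ1 : ρ.trace = 1) {lam : ℝ}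
    (h : lam ∈ imaxFeasible ρ) : 0 ≤ lam := by
  obtain ⟨σ, -, hσ1, hle⟩ := h
  have htr := (le_iff.mp hle).trace_nonneg
  rw [trace_sub, trace_smul, trace_kronecker, trace_margA, hρ1, hσ1, mul_one, smul_eq_mul,
    mul_one, sub_nonneg] at htr
  have h_one_le : (2 : ℝ) ^ (0 : ℝ) ≤ 2 ^ lam := by
    rw [Real.rpow_zero]
    exact_mod_cast htr
  exact (Real.rpow_le_rpow_left_iff one_lt_two).mp h_one_le

theorem two_mul_logb_card_mem_imaxFeasible [DecidableEq b] [Nonempty b]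
    {ρ : Matrix (a × b) (a × b) ℂ} (hρ : ρ.PosSemidef) :
    2 * Real.logb 2 (Fintype.card b) ∈ imaxFeasible ρ := by
  refine ⟨_, posSemidef_inv_card_smul_one, trace_inv_card_smul_one, ?_⟩
  have hb : (0 : ℝ) < Fintype.card b := by exact_mod_cast Fintype.card_pos
  convert hρ.le_card_smul_margA_kronecker_one using 1
  rw [Real.two_rpow_two_mul_logb hb, kronecker_smul, smul_smul]
  congr 1
  push_cast
  field_simp

theorem add_two_mul_logb_card_mem_imaxFeasible [DecidableEq b] [DecidableEq c] [Nonempty c]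
    {ρ : Matrix (a × b × c) (a × b × c) ℂ} (hρ : ρ.PosSemidef) {μ : ℝ}
    (hμ : μ ∈ imaxFeasible (margAB ρ)) :
    μ + 2 * Real.logb 2 (Fintype.card c) ∈ imaxFeasible ρ := by
  obtain ⟨σ, hσ, hσ1, hle⟩ := hμ
  refine ⟨σ ⊗ₖ ((Fintype.card c : ℂ)⁻¹ • 1), hσ.kronecker posSemidef_inv_card_smul_one,
    by rw [trace_kronecker, hσ1, trace_inv_card_smul_one, one_mul], ?_⟩
  have hc : (0 : ℝ) < Fintype.card c := by exact_mod_cast Fintype.card_pos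
  set e := Equiv.prodAssoc a b c
  rw [margA_margAB] at hle
  rw [← submatrix_equiv_le_submatrix_equiv_iff e]
  calc ρ.submatrix e e
      ≤ (Fintype.card c : ℂ) • (margAB ρ ⊗ₖ (1 : Matrix c c ℂ)) :=
        margA_submatrix_prodAssoc ρ ▸ (hρ.submatrix e).le_card_smul_margA_kronecker_one
    _ ≤ (Fintype.card c : ℂ) •
          (((((2 : ℝ) ^ μ : ℝ) : ℂ) • (margA ρ ⊗ₖ σ)) ⊗ₖ (1 : Matrix c c ℂ)) :=
        smul_le_smul_of_nonneg_left (kronecker_le_kronecker_of_posSemidef_right hle .one)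
          (Nat.cast_nonneg _)
    _ = _ := by
        simp only [submatrix_smul, Pi.smul_apply]
        rw [← kronecker_assoc', submatrix_submatrix, Equiv.symm_comp_self,
          submatrix_id_id, kronecker_smul, smul_kronecker, smul_smul, smul_smul,
          Real.rpow_add zero_lt_two, Real.two_rpow_two_mul_logb hc]
        congr 1
        push_cast
        field_simp

end MaxInformation

/-- Dimension bound for the max-information:
`I_max(A : BC)_ρ ≤ I_max(A : B)_ρ + 2 log |C|`. -/
theorem Imax_dim_bound {a b c : Type*} [Fintype a] [Fintype b] [Fintype c]
    [DecidableEq a] [DecidableEq b] [DecidableEq c]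
    (ρ : Matrix (a × b × c) (a × b × c) ℂ) (hρ : ρ.PosSemidef) (hρ1 : ρ.trace = 1) :
    Imax ρ ≤ Imax (margAB ρ) + 2 * Real.logb 2 (Fintype.card c) := by
  have : Nonempty (a × b × c) := by
    by_contra h
    rw [not_nonempty_iff] at h
    simp [trace_eq_zero_of_isEmpty] at hρ1
  obtain ⟨⟨-, j, k⟩⟩ := this
  have : Nonempty b := ⟨j⟩
  have : Nonempty c := ⟨k⟩
  have h_bdd : BddBelow (imaxFeasible ρ) := ⟨0, fun _ => nonneg_of_mem_imaxFeasible hρ1⟩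
  have h_ne : (imaxFeasible (margAB ρ)).Nonempty :=
    ⟨_, two_mul_logb_card_mem_imaxFeasible (margAB_posSemidef hρ)⟩
  rw [Imax_eq_sInf_imaxFeasible, Imax_eq_sInf_imaxFeasible, ← sub_le_iff_le_add]
  exact le_csInf h_ne fun μ hμ =>
    sub_le_iff_le_add.mpr (csInf_le h_bdd (add_two_mul_logb_card_mem_imaxFeasible hρ hμ))
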